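/- With the orders ≺ and ≺ₖ on a finite constraint set I with pairwise distinct variable sets, whose variables form a β-elimination order of the hypergraph of I: for all c, d, e ∈ I, if c ≺ₖ d, c ≺ₖ e and d ≺ e, then d ≺ₖ e. -/

import Mathlib

/-!
The order `≺` is the colexicographic order on variable sets, hence transitive and well-founded,
and the nest-point property at `xᵤ` says that if `a ≺ b` share `xᵤ`, then every variable `x_w` of
`a` with `w ≥ u` lies in `b`. Unfolding the recursion, `c ≺ₖ d` means `c ⪯ᵤ g ≺ d` for some `g`
sharing a variable `xᵤ`, `u < k`, with `d`. Chasing such witnesses with the nest-point property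
shows that a variable `x_w` of `c` with `w + 1 ≥ k` persists into `d`, and that `d ≺ₖ e` follows
both from `d ≺ₖ g ≺ e` with `g`, `e` sharing some `xᵤ`, `u < k`, and from `f ⪯ₖ d ≺ e` with `f`,
`e` sharing some `xᵤ`, `u < k`. The theorem then follows by well-founded induction on `e`: take a
witness `c ⪯ᵤ g ≺ e` of `c ≺ₖ e` and compare `g` with `d`.
-/

open Finset
open scoped Classical

variable {n : ℕ} {γ : Type*}

/-- `Xset n k` is the set `Xₖ = {x₁,…,xₖ}` of the first `k` variables, where the
variables are `Fin n` in their natural enumeration (`x_{k+1}` is the index `k`). -/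
def Xset (n k : ℕ) : Finset (Fin n) := Finset.univ.filter (fun v => (v : ℕ) < k)

/-- The order `≺`: `c ≺ d` iff for some `k`, `var(c) \ Xₖ ⊊ var(d) \ Xₖ`. -/
def prec (vr : γ → Finset (Fin n)) (c d : γ) : Prop :=
  ∃ k : ℕ, vr c \ Xset n k ⊂ vr d \ Xset n k

/-- The relations `≺ₖ`, defined inductively on `k`:
`≺₀ = ∅` and `c ≺_{k+1} d` iff `c ≺ₖ d` or there is `e ∈ I` with `c ⪯ₖ e ≺ d`
and `x_{k+1} ∈ var(d) ∩ var(e)`. -/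
def preck (I : Finset γ) (vr : γ → Finset (Fin n)) : ℕ → γ → γ → Prop
  | 0 => fun _ _ => False
  | (k+1) => fun c d => preck I vr k c d ∨
      ∃ e ∈ I, (c = e ∨ preck I vr k c e) ∧ prec vr e d ∧
        ∃ h : k < n, (⟨k, h⟩ : Fin n) ∈ vr d ∧ (⟨k, h⟩ : Fin n) ∈ vr e

/-- `x_{k+1}` is a nest point of the hypergraph of `I` after removing `x₁,…,xₖ`:
the edges (variable sets) containing it, with `Xₖ` removed, form a chain. -/
def NestAt (I : Finset γ) (vr : γ → Finset (Fin n)) (k : ℕ) : Prop :=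
  ∀ h : k < n, ∀ c ∈ I, ∀ d ∈ I,
    (⟨k, h⟩ : Fin n) ∈ vr c → (⟨k, h⟩ : Fin n) ∈ vr d →
      vr c \ Xset n k ⊆ vr d \ Xset n k ∨ vr d \ Xset n k ⊆ vr c \ Xset n k

/-- `x₁,…,xₙ` is a β-elimination order of the hypergraph of `I`. -/
def ElimOrder (I : Finset γ) (vr : γ → Finset (Fin n)) : Prop :=
  ∀ k : ℕ, NestAt I vr k

open Finset.Colex

section

variable {I : Finset γ} {vr : γ → Finset (Fin n)}

theorem mem_Xset {v : Fin n} {k : ℕ} : v ∈ Xset n k ↔ (v : ℕ) < k := by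
  simp [Xset]

theorem mem_sdiff_Xset {s : Finset (Fin n)} {v : Fin n} {k : ℕ} :
    v ∈ s \ Xset n k ↔ v ∈ s ∧ k ≤ v := by
  simp [mem_Xset]

theorem prec_iff_toColex_lt {c d : γ} : prec vr c d ↔ toColex (vr c) < toColex (vr d) := by
  rw [toColex_lt_toColex_iff_exists_forall_lt]
  constructor
  · rintro ⟨k, hsub⟩
    obtain ⟨a, had, hac⟩ := exists_of_ssubset hsub
    rw [mem_sdiff_Xset] at had
    refine ⟨a, had.1, fun hac' => hac (mem_sdiff_Xset.2 ⟨hac', had.2⟩), fun b hbc hbd => ?_⟩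
    have hbk : ¬ k ≤ (b : ℕ) := fun hkb =>
      hbd (mem_sdiff_Xset.1 (hsub.1 (mem_sdiff_Xset.2 ⟨hbc, hkb⟩))).1
    omega
  · rintro ⟨a, had, hac, hmax⟩
    have hsub : vr c \ Xset n a ⊆ vr d \ Xset n a := fun x hx => by
      rw [mem_sdiff_Xset] at hx ⊢
      by_contra hxd
      exact absurd (hmax x hx.1 (fun h => hxd ⟨h, hx.2⟩)) (by omega)
    refine ⟨a, (ssubset_iff_of_subset hsub).2 ⟨a, mem_sdiff_Xset.2 ⟨had, le_rfl⟩, ?_⟩⟩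
    exact fun h => hac (mem_sdiff_Xset.1 h).1

theorem prec_trans {c d e : γ} (hcd : prec vr c d) (hde : prec vr d e) : prec vr c e := by
  rw [prec_iff_toColex_lt] at *
  exact hcd.trans hde

theorem prec_trichotomy (vr : γ → Finset (Fin n)) (c d : γ) :
    vr c = vr d ∨ prec vr c d ∨ prec vr d c := by
  simp only [prec_iff_toColex_lt]
  rcases lt_trichotomy (toColex (vr c)) (toColex (vr d)) with h | h | h
  · exact Or.inr (Or.inl h)
  · exact Or.inl (toColex.injective h)
  · exact Or.inr (Or.inr h)

theorem prec_wellFounded (vr : γ → Finset (Fin n)) : WellFounded (prec vr) := by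
  have : Finite (Colex (Finset (Fin n))) := Finite.of_injective _ ofColex.injective
  have hprec : prec vr = InvImage (· < ·) (fun c => toColex (vr c)) := by
    ext c d
    exact prec_iff_toColex_lt
  exact hprec ▸ InvImage.wf _ wellFounded_lt

theorem preck_mono {j k : ℕ} (hjk : j ≤ k) {c d : γ} (h : preck I vr j c d) :
    preck I vr k c d := by
  induction hjk with
  | refl => exact h
  | step _ ih => exact Or.inl ih

theorem preck_iff_exists {k : ℕ} {c d : γ} :
    preck I vr k c d ↔ ∃ u : Fin n, (u : ℕ) < k ∧ ∃ g ∈ I,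
      (c = g ∨ preck I vr u c g) ∧ prec vr g d ∧ u ∈ vr g ∧ u ∈ vr d := by
  induction k with
  | zero => simp [preck]
  | succ k ih =>
    constructor
    · rintro (h | ⟨g, hg, hcg, hgd, hk, hkd, hkg⟩)
      · obtain ⟨u, hu, rest⟩ := ih.1 h
        exact ⟨u, by omega, rest⟩
      · exact ⟨⟨k, hk⟩, k.lt_succ_self, g, hg, hcg, hgd, hkg, hkd⟩
    · rintro ⟨u, hu, g, hg, hcg, hgd, hug, hud⟩
      rcases Nat.lt_succ_iff_lt_or_eq.1 hu with hu | rfl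
      · exact Or.inl (ih.2 ⟨u, hu, g, hg, hcg, hgd, hug, hud⟩)
      · exact Or.inr ⟨g, hg, hcg, hgd, u.2, hud, hug⟩

theorem preck_of_prec_of_mem {k : ℕ} {d e : γ} {u : Fin n} (hd : d ∈ I) (hde : prec vr d e)
    (hud : u ∈ vr d) (hue : u ∈ vr e) (huk : (u : ℕ) < k) : preck I vr k d e :=
  preck_iff_exists.2 ⟨u, huk, d, hd, Or.inl rfl, hde, hud, hue⟩

namespace ElimOrder

theorem mem_of_prec (helim : ElimOrder I vr) {a b : γ} {u w : Fin n} (ha : a ∈ I) (hb : b ∈ I)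
    (hab : prec vr a b) (hua : u ∈ vr a) (hub : u ∈ vr b) (hwa : w ∈ vr a) (huw : (u : ℕ) ≤ w) :
    w ∈ vr b := by
  rcases helim u u.2 a ha b hb hua hub with hsub | hsub
  · exact (mem_sdiff_Xset.1 (hsub (mem_sdiff_Xset.2 ⟨hwa, huw⟩))).1
  · -- the largest element of `vr b \ vr a` exceeds `w ≥ u`, so it lies in `vr b \ Xset n u ⊆ vr a`
    by_contra hwb
    obtain ⟨m, hmb, hma, hmax⟩ :=
      toColex_lt_toColex_iff_exists_forall_lt.1 (prec_iff_toColex_lt.1 hab)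
    have hwm : w < m := hmax w hwa hwb
    exact hma (mem_sdiff_Xset.1 (hsub (mem_sdiff_Xset.2 ⟨hmb, by omega⟩))).1

theorem mem_of_preck (helim : ElimOrder I vr) {w : Fin n} :
    ∀ {k : ℕ} {c d : γ}, d ∈ I → preck I vr k c d → w ∈ vr c → k ≤ (w : ℕ) + 1 → w ∈ vr d := by
  intro k
  induction k with
  | zero => intro c d _ h; exact h.elim
  | succ k ih =>
    rintro c d hd (hcd | ⟨g, hg, hcg, hgd, hk, hkd, hkg⟩) hwc hkw
    · exact ih hd hcd hwc (by omega)
    · have hwg : w ∈ vr g := by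
        rcases hcg with rfl | hcg
        · exact hwc
        · exact ih hg hcg hwc (by omega)
      exact helim.mem_of_prec hg hd hgd hkg hkd hwg (by simpa using hkw)

theorem preck_of_preck_of_prec (helim : ElimOrder I vr) {k : ℕ} {d g e : γ} {u : Fin n}
    (hg : g ∈ I) (he : e ∈ I) (hdg : preck I vr k d g) (hge : prec vr g e) (hug : u ∈ vr g)
    (hue : u ∈ vr e) (huk : (u : ℕ) < k) : preck I vr k d e := by
  obtain ⟨v, hvk, h, hh, hdh, hhg, hvh, hvg⟩ := preck_iff_exists.1 hdg
  rcases lt_or_ge (v : ℕ) u with hvu | huv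
  · have hdg' : preck I vr u d g := preck_iff_exists.2 ⟨v, hvu, h, hh, hdh, hhg, hvh, hvg⟩
    exact preck_iff_exists.2 ⟨u, huk, g, hg, Or.inr hdg', hge, hug, hue⟩
  · exact preck_iff_exists.2 ⟨v, hvk, h, hh, hdh, prec_trans hhg hge, hvh,
      helim.mem_of_prec hg he hge hug hue hvg huv⟩

theorem preck_of_mem_of_preck (helim : ElimOrder I vr) {e : γ} (he : e ∈ I) :
    ∀ {k : ℕ} {f d : γ} {u : Fin n}, d ∈ I → (f = d ∨ preck I vr k f d) → prec vr d e →
      u ∈ vr f → u ∈ vr e → (u : ℕ) < k → preck I vr k d e := by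
  intro k
  induction k using Nat.strong_induction_on with
  | _ k ih =>
  rintro f d u hd (rfl | hfd) hde huf hue huk
  · exact preck_of_prec_of_mem hd hde huf hue huk
  by_cases hud : u ∈ vr d
  · exact preck_of_prec_of_mem hd hde hud hue huk
  obtain ⟨v, hvk, g, hg, hfg, hgd, hvg, hvd⟩ := preck_iff_exists.1 hfd
  have huv : (u : ℕ) < v := by
    by_contra! hvu
    have hfd' : preck I vr (v + 1) f d :=
      preck_iff_exists.2 ⟨v, v.val.lt_succ_self, g, hg, hfg, hgd, hvg, hvd⟩
    exact hud (helim.mem_of_preck hd hfd' huf (by omega))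
  have hge : preck I vr v g e := ih v hvk hg hfg (prec_trans hgd hde) huf hue huv
  exact preck_of_prec_of_mem hd hde hvd (helim.mem_of_preck he hge hvg (by omega)) hvk

end ElimOrder

end

theorem stmt8_general (I : Finset γ) (vr : γ → Finset (Fin n))
    (helim : ElimOrder I vr) :
    ∀ k : ℕ, ∀ c ∈ I, ∀ d ∈ I, ∀ e ∈ I,
      preck I vr k c d → preck I vr k c e → prec vr d e → preck I vr k d e := by
  intro k c _ d hd e he hcd hce hde
  induction e using (prec_wellFounded vr).induction generalizing d with
  | _ e ih =>
  obtain ⟨u, huk, g, hg, hcg, hge, hug, hue⟩ := preck_iff_exists.1 hce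
  rcases hcg with rfl | hcg
  · exact helim.preck_of_mem_of_preck he hd (Or.inr hcd) hde hug hue huk
  have hcg' : preck I vr k c g := preck_mono huk.le hcg
  rcases prec_trichotomy vr d g with hdg | hdg | hgd
  · exact preck_of_prec_of_mem hd hde (hdg ▸ hug) hue huk
  · exact helim.preck_of_preck_of_prec hg he (ih g hge d hd hg hcd hcg' hdg) hge hug hue huk
  · exact helim.preck_of_mem_of_preck he hd (Or.inr (ih d hde g hg hd hcg' hcd hgd)) hde
      hug hue huk

/-- if `c ≺ₖ d`, `c ≺ₖ e` and `d ≺ e`, then `d ≺ₖ e`. -/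
theorem stmt8 (I : Finset γ) (vr : γ → Finset (Fin n))
    (hdist : ∀ c ∈ I, ∀ d ∈ I, vr c = vr d → c = d)
    (hcover : I.sup vr = Finset.univ)
    (helim : ElimOrder I vr) :
    ∀ k : ℕ, ∀ c ∈ I, ∀ d ∈ I, ∀ e ∈ I,
      preck I vr k c d → preck I vr k c e → prec vr d e → preck I vr k d e :=
  stmt8_general I vr helim
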